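/- Neither the family of behaviors of spliffers nor the family of behaviors of deterministic splitters is closed under intersection: over the alphabet A = {a,b} (a ≠ b), there exist two deterministic splitters S₁ and S₂ with finitely many states (with behaviors L₁ = {(aⁿbaᵐ, aᵐbaˢ, aⁿba^{2m}baˢ) : n,m,s > 0} and L₂ = {(aⁱbaʲ, aᵏbaⁱ, aᵏba^{2i}baʲ) : i,j,k > 0}) such that |S₁| ∩ |S₂| = {(aˢbaˢ, aˢbaˢ, aˢba^{2s}baˢ) : s > 0} is not the behavior of any spliffer with finitely many states. -/

import Mathlib

/-- Words over the alphabet `A`, i.e. elements of the free monoid `A*`. -/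
abbrev Word (A : Type) := List A

/-- The generating set `G = {(a,ε,a) : a ∈ A} ∪ {(ε,a,a) : a ∈ A}` of the
Shuffling Monoid. -/
def genG (A : Type) : Set (Word A × Word A × Word A) :=
  {g | ∃ a : A, g = ([a], [], [a]) ∨ g = ([], [a], [a])}

/-- Componentwise product (concatenation) of a list of triples of words. -/
def prodTriple {A : Type} (ls : List (Word A × Word A × Word A)) :
    Word A × Word A × Word A :=
  ((ls.map fun l => l.1).flatten, (ls.map fun l => l.2.1).flatten,
    (ls.map fun l => l.2.2).flatten)

/-- The Shuffling Monoid `U`: the submonoid of `A* × A* × A*` generated by `G`,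
described as the set of all products of finite sequences of generators. -/
def shuffleU (A : Type) : Set (Word A × Word A × Word A) :=
  {m | ∃ ls : List (Word A × Word A × Word A), (∀ l ∈ ls, l ∈ genG A) ∧ prodTriple ls = m}

/-- A spliffer (equivalently, splitter) over `A`: a finite automaton whose
transitions are labeled by elements of `G`. -/
structure Spliffer (A : Type) where
  Q : Type
  finQ : Finite Q
  E : Q → (Word A × Word A × Word A) → Q → Prop
  I : Set Q
  T : Set Q
  labels_mem : ∀ {q l q'}, E q l q' → l ∈ genG A

/-- Paths in a spliffer, recording the sequence of labels. -/
inductive Spliffer.Path {A : Type} (S : Spliffer A) :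
    S.Q → List (Word A × Word A × Word A) → S.Q → Prop
  | nil (q : S.Q) : Spliffer.Path S q [] q
  | cons {q q' q'' : S.Q} {l : Word A × Word A × Word A}
      {ls : List (Word A × Word A × Word A)} :
      S.E q l q' → Spliffer.Path S q' ls q'' → Spliffer.Path S q (l :: ls) q''

/-- The behavior `|S|` of a spliffer: products of the label sequences of all
successful runs. -/
def Spliffer.behavior {A : Type} (S : Spliffer A) : Set (Word A × Word A × Word A) :=
  {m | ∃ q ∈ S.I, ∃ q' ∈ S.T, ∃ ls, S.Path q ls q' ∧ prodTriple ls = m}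

/-- A splitter is deterministic if it has a single initial state, for every state
and input letter there is at most one outgoing transition reading that letter,
and all transitions leaving a given state write to the same tape. -/
def Spliffer.Deterministic {A : Type} (S : Spliffer A) : Prop :=
  (∃! i, i ∈ S.I) ∧
  (∀ ⦃q l₁ q₁ l₂ q₂⦄, S.E q l₁ q₁ → S.E q l₂ q₂ → l₁.2.2 = l₂.2.2 → l₁ = l₂ ∧ q₁ = q₂) ∧
  (∀ ⦃q l₁ q₁ l₂ q₂⦄, S.E q l₁ q₁ → S.E q l₂ q₂ →
    (l₁.1 = [] ∧ l₂.1 = []) ∨ (l₁.2.1 = [] ∧ l₂.2.1 = []))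

/-- The set `L₁ = {(aⁿbaᵐ, aᵐbaˢ, aⁿba^{2m}baˢ) : n,m,s > 0}`. -/
def setL1 {A : Type} (a b : A) : Set (Word A × Word A × Word A) :=
  {x | ∃ n m s : ℕ, 0 < n ∧ 0 < m ∧ 0 < s ∧
    x = (List.replicate n a ++ [b] ++ List.replicate m a,
         List.replicate m a ++ [b] ++ List.replicate s a,
         List.replicate n a ++ [b] ++ List.replicate (2 * m) a ++ [b] ++
           List.replicate s a)}

/-- The set `L₂ = {(aⁱbaʲ, aᵏbaⁱ, aᵏba^{2i}baʲ) : i,j,k > 0}`. -/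
def setL2 {A : Type} (a b : A) : Set (Word A × Word A × Word A) :=
  {x | ∃ i j k : ℕ, 0 < i ∧ 0 < j ∧ 0 < k ∧
    x = (List.replicate i a ++ [b] ++ List.replicate j a,
         List.replicate k a ++ [b] ++ List.replicate i a,
         List.replicate k a ++ [b] ++ List.replicate (2 * i) a ++ [b] ++
           List.replicate j a)}

/-- The set `{(aˢbaˢ, aˢbaˢ, aˢba^{2s}baˢ) : s > 0}`. -/
def setLcap {A : Type} (a b : A) : Set (Word A × Word A × Word A) :=
  {x | ∃ s : ℕ, 0 < s ∧
    x = (List.replicate s a ++ [b] ++ List.replicate s a,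
         List.replicate s a ++ [b] ++ List.replicate s a,
         List.replicate s a ++ [b] ++ List.replicate (2 * s) a ++ [b] ++
           List.replicate s a)}

/-!
A seven-state deterministic splitter reads `L₁`: it copies `aⁿb` to the first tape, then writes
`a` alternately to the second and the first tape `m` times, then copies `baˢ` to the second
tape. Exchanging the first two tapes gives a deterministic splitter for `L₂`, and in `L₁ ∩ L₂` the
three exponents are forced to coincide.

Forgetting which of the first two tapes a transition writes turns a spliffer into an NFA reading
the third tape, so the third components of a behavior form a regular language. For `L₁ ∩ L₂` this
language is `{aˢba²ˢbaˢ}`, which is not regular: pumping inside the first block of `a`s breaks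
the equality of the first and last blocks.
-/

open List

section Words

variable {A : Type}

theorem replicate_append_cons_inj {a b : A} (hab : a ≠ b) {p q : ℕ} {u v : Word A}
    (h : replicate p a ++ b :: u = replicate q a ++ b :: v) : p = q ∧ u = v := by
  induction p generalizing q with
  | zero => cases q <;> simp_all [replicate_succ, Ne.symm hab]
  | succ p ih =>
    cases q with
    | zero => simp_all [replicate_succ]
    | succ q => simpa using ih (by simpa [replicate_succ] using h)

theorem append_pump_eq_replicate_append {a : A} {s : ℕ} {u v w r : Word A}
    (h : u ++ v ++ w = replicate s a ++ r) (hlen : u.length + v.length ≤ s) :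
    u ++ v ++ v ++ w = replicate (s + v.length) a ++ r := by
  have huv : u ++ v = replicate (u.length + v.length) a := by
    have := congrArg (take (u.length + v.length)) h
    rwa [append_assoc, ← append_assoc u, take_left' (by simp),
      take_append_of_le_length (by simpa using hlen), take_replicate, min_eq_left hlen] at this
  have hw : w = replicate (s - (u.length + v.length)) a ++ r := by
    have := congrArg (drop (u.length + v.length)) h
    rwa [append_assoc, ← append_assoc u, drop_left' (by simp),
      drop_append_of_le_length (by simpa using hlen), drop_replicate] at this
  have hv : v = replicate v.length a :=
    eq_replicate_iff.2 ⟨rfl, fun x hx => eq_of_mem_replicate (huv ▸ mem_append_right u hx)⟩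
  rw [huv, hw, hv]
  simp only [← append_assoc, replicate_append_replicate, length_replicate]
  congr 2
  omega

end Words

section Products

variable {A : Type}

theorem prodTriple_nil : prodTriple ([] : List (Word A × Word A × Word A)) = ([], [], []) :=
  rfl

theorem prodTriple_cons (l : Word A × Word A × Word A) (ls : List (Word A × Word A × Word A)) :
    prodTriple (l :: ls) = (l.1 ++ (prodTriple ls).1, l.2.1 ++ (prodTriple ls).2.1,
      l.2.2 ++ (prodTriple ls).2.2) := by
  simp [prodTriple]

theorem prodTriple_append (ls₁ ls₂ : List (Word A × Word A × Word A)) :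
    prodTriple (ls₁ ++ ls₂) = ((prodTriple ls₁).1 ++ (prodTriple ls₂).1,
      (prodTriple ls₁).2.1 ++ (prodTriple ls₂).2.1, (prodTriple ls₁).2.2 ++ (prodTriple ls₂).2.2) := by
  simp [prodTriple]

theorem prodTriple_flatten_replicate (n : ℕ) (ls : List (Word A × Word A × Word A)) :
    prodTriple (replicate n ls).flatten = ((replicate n (prodTriple ls).1).flatten,
      (replicate n (prodTriple ls).2.1).flatten, (replicate n (prodTriple ls).2.2).flatten) := by
  induction n with
  | zero => rfl
  | succ n ih => rw [replicate_succ, flatten_cons, prodTriple_append, ih]; simp [replicate_succ]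

end Products

namespace Spliffer

variable {A : Type} {S : Spliffer A}

theorem Path.single {q q' : S.Q} {l : Word A × Word A × Word A} (e : S.E q l q') :
    S.Path q [l] q' :=
  .cons e (.nil q')

theorem Path.append {q q' q'' : S.Q} {ls₁ ls₂ : List (Word A × Word A × Word A)}
    (h₁ : S.Path q ls₁ q') (h₂ : S.Path q' ls₂ q'') : S.Path q (ls₁ ++ ls₂) q'' := by
  induction h₁ with
  | nil => exact h₂
  | cons e _ ih => exact .cons e (ih h₂)

theorem Path.flatten_replicate {q : S.Q} {ls : List (Word A × Word A × Word A)}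
    (h : S.Path q ls q) (n : ℕ) : S.Path q (replicate n ls).flatten q := by
  induction n with
  | zero => exact .nil q
  | succ n ih => rw [replicate_succ, flatten_cons]; exact h.append ih

def toNFA (S : Spliffer A) : NFA A S.Q where
  step q c := {q' | S.E q ([c], [], [c]) q' ∨ S.E q ([], [c], [c]) q'}
  start := S.I
  accept := S.T

theorem nonempty_toNFA_path_iff {q q' : S.Q} {w : Word A} :
    Nonempty (S.toNFA.Path q q' w) ↔ ∃ ls, S.Path q ls q' ∧ (prodTriple ls).2.2 = w := by
  constructor
  · rintro ⟨p⟩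
    induction p with
    | nil q => exact ⟨[], .nil q, rfl⟩
    | cons _ _ _ c _ e _ ih =>
      obtain ⟨ls, hls, rfl⟩ := ih
      rcases e with e | e <;> exact ⟨_ :: ls, .cons e hls, by simp [prodTriple_cons]⟩
  · rintro ⟨ls, h, rfl⟩
    induction h with
    | nil q => exact ⟨.nil q⟩
    | @cons q₀ q₁ _ _ _ e _ ih =>
      obtain ⟨p⟩ := ih
      obtain ⟨c, rfl | rfl⟩ := S.labels_mem e
      · exact ⟨.cons q₁ q₀ _ c _ (Or.inl e) p⟩
      · exact ⟨.cons q₁ q₀ _ c _ (Or.inr e) p⟩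

theorem toNFA_accepts (S : Spliffer A) : S.toNFA.accepts = (·.2.2) '' S.behavior := by
  ext w
  simp only [NFA.accepts_iff_exists_path, nonempty_toNFA_path_iff]
  constructor
  · rintro ⟨q, hq, q', hq', ls, h, rfl⟩
    exact ⟨_, ⟨q, hq, q', hq', ls, h, rfl⟩, rfl⟩
  · rintro ⟨_, ⟨q, hq, q', hq', ls, h, rfl⟩, rfl⟩
    exact ⟨q, hq, q', hq', ls, h, rfl⟩

theorem isRegular_image_behavior (S : Spliffer A) :
    Language.IsRegular ((·.2.2) '' S.behavior) := by
  have := S.finQ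
  have := Fintype.ofFinite (Set S.Q)
  exact ⟨Set S.Q, inferInstance, S.toNFA.toDFA, by rw [NFA.toDFA_correct, toNFA_accepts]⟩

end Spliffer

namespace SplitterL1

open Spliffer

variable {A : Type}

inductive State | s0 | s1 | s2 | s3 | s4 | s5 | s6
  deriving DecidableEq

instance : Fintype State :=
  ⟨{.s0, .s1, .s2, .s3, .s4, .s5, .s6}, by intro x; cases x <;> simp⟩

inductive Step (a b : A) : State → Word A × Word A × Word A → State → Prop
  | s0_s1 : Step a b .s0 ([a], [], [a]) .s1
  | s1_s1 : Step a b .s1 ([a], [], [a]) .s1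
  | s1_s2 : Step a b .s1 ([b], [], [b]) .s2
  | s2_s3 : Step a b .s2 ([], [a], [a]) .s3
  | s3_s4 : Step a b .s3 ([a], [], [a]) .s4
  | s4_s3 : Step a b .s4 ([], [a], [a]) .s3
  | s4_s5 : Step a b .s4 ([], [b], [b]) .s5
  | s5_s6 : Step a b .s5 ([], [a], [a]) .s6
  | s6_s6 : Step a b .s6 ([], [a], [a]) .s6

def splitter (a b : A) : Spliffer A where
  Q := State
  finQ := inferInstance
  E := Step a b
  I := {.s0}
  T := {.s6}
  labels_mem := by intro _ _ _ h; cases h <;> simp [genG]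

theorem deterministic {a b : A} (hab : a ≠ b) : (splitter a b).Deterministic := by
  refine ⟨⟨.s0, rfl, fun _ h => h⟩, ?_, ?_⟩
  · intro _ _ _ _ _ h₁ h₂ h
    cases h₁ <;> cases h₂ <;> first | exact ⟨rfl, rfl⟩ | simp_all [Ne.symm hab]
  · intro _ _ _ _ _ h₁ h₂
    cases h₁ <;> cases h₂ <;> simp

/-- The triples read on the runs from a state to the final state `s6`. -/
def behaviorFrom (a b : A) : State → Set (Word A × Word A × Word A)
  | .s0 => {x | ∃ n m t, 0 < n ∧ 0 < m ∧ 0 < t ∧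
      x = (replicate n a ++ b :: replicate m a, replicate m a ++ b :: replicate t a,
        replicate n a ++ b :: (replicate (2 * m) a ++ b :: replicate t a))}
  | .s1 => {x | ∃ n m t, 0 < m ∧ 0 < t ∧
      x = (replicate n a ++ b :: replicate m a, replicate m a ++ b :: replicate t a,
        replicate n a ++ b :: (replicate (2 * m) a ++ b :: replicate t a))}
  | .s2 => {x | ∃ m t, 0 < m ∧ 0 < t ∧
      x = (replicate m a, replicate m a ++ b :: replicate t a,
        replicate (2 * m) a ++ b :: replicate t a)}
  | .s3 => {x | ∃ m t, 0 < t ∧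
      x = (replicate (m + 1) a, replicate m a ++ b :: replicate t a,
        replicate (2 * m + 1) a ++ b :: replicate t a)}
  | .s4 => {x | ∃ m t, 0 < t ∧
      x = (replicate m a, replicate m a ++ b :: replicate t a,
        replicate (2 * m) a ++ b :: replicate t a)}
  | .s5 => {x | ∃ t, 0 < t ∧ x = ([], replicate t a, replicate t a)}
  | .s6 => {x | ∃ t, x = ([], replicate t a, replicate t a)}

theorem prodTriple_mem_behaviorFrom {a b : A} {q q' : (splitter a b).Q}
    {ls : List (Word A × Word A × Word A)} (h : (splitter a b).Path q ls q') (hq' : q' = .s6) :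
    prodTriple ls ∈ behaviorFrom a b q := by
  induction h with
  | nil => subst hq'; exact ⟨0, rfl⟩
  | cons e _ ih =>
    have two_mul_succ (m : ℕ) : 2 * (m + 1) = 2 * m + 1 + 1 := by ring
    rw [prodTriple_cons]
    cases e
    case s0_s1 =>
      obtain ⟨n, m, t, hm, ht, hx⟩ := ih hq'
      exact ⟨n + 1, m, t, n.succ_pos, hm, ht, by simp [hx, replicate_succ]⟩
    case s1_s1 =>
      obtain ⟨n, m, t, hm, ht, hx⟩ := ih hq'
      exact ⟨n + 1, m, t, hm, ht, by simp [hx, replicate_succ]⟩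
    case s1_s2 =>
      obtain ⟨m, t, hm, ht, hx⟩ := ih hq'
      exact ⟨0, m, t, hm, ht, by simp [hx]⟩
    case s2_s3 =>
      obtain ⟨m, t, ht, hx⟩ := ih hq'
      exact ⟨m + 1, t, m.succ_pos, ht, by simp [hx, replicate_succ, two_mul_succ]⟩
    case s3_s4 =>
      obtain ⟨m, t, ht, hx⟩ := ih hq'
      exact ⟨m, t, ht, by simp [hx, replicate_succ]⟩
    case s4_s3 =>
      obtain ⟨m, t, ht, hx⟩ := ih hq'
      exact ⟨m + 1, t, ht, by simp [hx, replicate_succ, two_mul_succ]⟩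
    case s4_s5 =>
      obtain ⟨t, ht, hx⟩ := ih hq'
      exact ⟨0, t, ht, by simp [hx]⟩
    case s5_s6 =>
      obtain ⟨t, hx⟩ := ih hq'
      exact ⟨t + 1, t.succ_pos, by simp [hx, replicate_succ]⟩
    case s6_s6 =>
      obtain ⟨t, hx⟩ := ih hq'
      exact ⟨t + 1, by simp [hx, replicate_succ]⟩

theorem behavior_splitter (a b : A) : (splitter a b).behavior = setL1 a b := by
  ext x
  constructor
  · rintro ⟨_, rfl, _, hq', ls, h, rfl⟩
    obtain ⟨n, m, t, hn, hm, ht, hx⟩ := prodTriple_mem_behaviorFrom h hq'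
    exact ⟨n, m, t, hn, hm, ht, by simp [hx]⟩
  · rintro ⟨n, m, t, hn, hm, ht, rfl⟩
    obtain ⟨n, rfl⟩ := Nat.exists_eq_add_one.2 hn
    obtain ⟨m, rfl⟩ := Nat.exists_eq_add_one.2 hm
    obtain ⟨t, rfl⟩ := Nat.exists_eq_add_one.2 ht
    refine ⟨.s0, rfl, .s6, rfl, [([a], [], [a])] ++ (replicate n [([a], [], [a])]).flatten ++
      [([b], [], [b]), ([], [a], [a]), ([a], [], [a])] ++
      (replicate m [([], [a], [a]), ([a], [], [a])]).flatten ++ [([], [b], [b]), ([], [a], [a])] ++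
      (replicate t [([], [a], [a])]).flatten, ?_, ?_⟩
    · exact (((((Path.single Step.s0_s1).append (.flatten_replicate (.single Step.s1_s1) n)).append
        (.cons Step.s1_s2 (.cons Step.s2_s3 (.single Step.s3_s4)))).append
        (.flatten_replicate (.cons Step.s4_s3 (.single Step.s3_s4)) m)).append
        (.cons Step.s4_s5 (.single Step.s5_s6))).append (.flatten_replicate (.single Step.s6_s6) t)
    · simp only [prodTriple_append, prodTriple_flatten_replicate, prodTriple_cons, prodTriple_nil]
      have hpair : (replicate m [a, a]).flatten = replicate (2 * m) a := by
        simp only [mul_comm, ← flatten_replicate_replicate, reduceReplicate]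
      simp [hpair, replicate_succ, mul_add]

end SplitterL1

section Swap

variable {A : Type}

def swapTapes (x : Word A × Word A × Word A) : Word A × Word A × Word A := (x.2.1, x.1, x.2.2)

@[simp] theorem swapTapes_swapTapes (x : Word A × Word A × Word A) : swapTapes (swapTapes x) = x :=
  rfl

theorem mem_genG_of_swapTapes {l : Word A × Word A × Word A} (h : swapTapes l ∈ genG A) :
    l ∈ genG A := by
  obtain ⟨c, hc | hc⟩ := h <;> rw [← swapTapes_swapTapes l, hc]
  exacts [⟨c, Or.inr rfl⟩, ⟨c, Or.inl rfl⟩]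

theorem prodTriple_map_swapTapes (ls : List (Word A × Word A × Word A)) :
    prodTriple (ls.map swapTapes) = swapTapes (prodTriple ls) := by
  simp [prodTriple, swapTapes, Function.comp_def]

def Spliffer.swap (S : Spliffer A) : Spliffer A where
  Q := S.Q
  finQ := S.finQ
  E q l q' := S.E q (swapTapes l) q'
  I := S.I
  T := S.T
  labels_mem h := mem_genG_of_swapTapes (S.labels_mem h)

namespace Spliffer

variable {S : Spliffer A}

theorem Path.swap {q q' : S.Q} {ls : List (Word A × Word A × Word A)} (h : S.Path q ls q') :
    S.swap.Path q (ls.map swapTapes) q' := by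
  induction h with
  | nil q => exact Path.nil (S := S.swap) q
  | cons e _ ih => exact .cons (show S.E _ (swapTapes (swapTapes _)) _ from e) ih

theorem swap_behavior (S : Spliffer A) : S.swap.behavior = swapTapes ⁻¹' S.behavior := by
  ext x
  constructor
  · rintro ⟨q, hq, q', hq', ls, h, rfl⟩
    exact ⟨q, hq, q', hq', ls.map swapTapes, h.swap, prodTriple_map_swapTapes ls⟩
  · rintro ⟨q, hq, q', hq', ls, h, hx⟩
    exact ⟨q, hq, q', hq', ls.map swapTapes, h.swap, by rw [prodTriple_map_swapTapes, hx]; rfl⟩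

theorem Deterministic.swap (h : S.Deterministic) : S.swap.Deterministic := by
  obtain ⟨hI, hread, htape⟩ := h
  refine ⟨hI, fun _ _ _ _ _ e₁ e₂ he => ?_, fun _ _ _ _ _ e₁ e₂ => (htape e₁ e₂).symm⟩
  obtain ⟨hl, hq⟩ := hread e₁ e₂ he
  exact ⟨by simpa using congrArg swapTapes hl, hq⟩

end Spliffer

theorem preimage_swapTapes_setL1 (a b : A) : swapTapes ⁻¹' setL1 a b = setL2 a b := by
  ext ⟨x₁, x₂, x₃⟩
  simp only [Set.mem_preimage, swapTapes, setL1, setL2, Set.mem_ofPred_eq, Prod.mk.injEq]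
  constructor
  · rintro ⟨n, m, s, hn, hm, hs, h₂, h₁, h₃⟩
    exact ⟨m, s, n, hm, hs, hn, h₁, h₂, h₃⟩
  · rintro ⟨i, j, k, hi, hj, hk, h₁, h₂, h₃⟩
    exact ⟨k, i, j, hk, hi, hj, h₂, h₁, h₃⟩

end Swap

section SetLcap

variable {A : Type}

theorem setL1_inter_setL2 {a b : A} (hab : a ≠ b) : setL1 a b ∩ setL2 a b = setLcap a b := by
  ext x
  constructor
  · rintro ⟨⟨n, m, s, hn, -, -, rfl⟩, ⟨i, j, k, -, -, -, h⟩⟩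
    simp only [Prod.mk.injEq, append_assoc, cons_append, nil_append] at h
    obtain ⟨h₁, h₂, h₃⟩ := h
    obtain ⟨hni, hmj⟩ := replicate_append_cons_inj hab h₁
    obtain ⟨-, hsi⟩ := replicate_append_cons_inj hab h₂
    obtain ⟨-, h₃⟩ := replicate_append_cons_inj hab h₃
    obtain ⟨hmi, -⟩ := replicate_append_cons_inj hab h₃
    rw [replicate_left_inj] at hmj hsi
    exact ⟨n, hn, by rw [show m = n by omega, show s = n by omega]⟩
  · rintro ⟨s, hs, rfl⟩
    exact ⟨⟨s, s, s, hs, hs, hs, rfl⟩, ⟨s, s, s, hs, hs, hs, rfl⟩⟩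

theorem not_isRegular_image_setLcap {a b : A} (hab : a ≠ b) :
    ¬ Language.IsRegular ((·.2.2) '' setLcap a b) := by
  rintro ⟨σ, _, M, hM⟩
  set s := Fintype.card σ + 1
  have hx : replicate s a ++ b :: (replicate (2 * s) a ++ b :: replicate s a) ∈ M.accepts := by
    rw [hM]
    exact ⟨_, ⟨s, Nat.succ_pos _, rfl⟩, by simp⟩
  obtain ⟨u, v, w, huvw, hlen, hv, hpump⟩ := M.pumping_lemma hx (by simp; omega)
  have hpumped : u ++ (v ++ v) ++ w ∈ M.accepts :=
    hpump (Language.append_mem_mul (Language.append_mem_mul rfl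
      (Language.mem_kstar.2 ⟨[v, v], by simp, by simp; rfl⟩)) rfl)
  rw [hM, ← append_assoc, append_pump_eq_replicate_append huvw.symm (by omega)] at hpumped
  obtain ⟨_, ⟨t, -, rfl⟩, ht⟩ := hpumped
  simp only [append_assoc, singleton_append] at ht
  obtain ⟨hts, ht⟩ := replicate_append_cons_inj hab ht
  obtain ⟨hts', -⟩ := replicate_append_cons_inj hab ht
  exact hv (length_eq_zero_iff.1 (by omega))

end SetLcap

theorem not_closed_under_intersection_general {A : Type} (a b : A) (hab : a ≠ b) :
    ∃ S₁ S₂ : Spliffer A, S₁.Deterministic ∧ S₂.Deterministic ∧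
      S₁.behavior = setL1 a b ∧ S₂.behavior = setL2 a b ∧
      S₁.behavior ∩ S₂.behavior = setLcap a b ∧
      ¬ ∃ S : Spliffer A, S.behavior = S₁.behavior ∩ S₂.behavior := by
  have hL₁ := SplitterL1.behavior_splitter a b
  have hL₂ : (SplitterL1.splitter a b).swap.behavior = setL2 a b := by
    rw [Spliffer.swap_behavior, hL₁, preimage_swapTapes_setL1]
  refine ⟨_, _, SplitterL1.deterministic hab, (SplitterL1.deterministic hab).swap, hL₁, hL₂, ?_, ?_⟩
  · rw [hL₁, hL₂, setL1_inter_setL2 hab]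
  · rintro ⟨S, hS⟩
    rw [hL₁, hL₂, setL1_inter_setL2 hab] at hS
    exact not_isRegular_image_setLcap hab (hS ▸ S.isRegular_image_behavior)

/-- over `A = {a,b}`, there are deterministic splitters `S₁`, `S₂`
with behaviors `L₁` and `L₂` such that `|S₁| ∩ |S₂|` is not the behavior of any
spliffer: behaviors of (deterministic) splitters are not closed under
intersection. -/
theorem not_closed_under_intersection {A : Type} (a b : A) (hab : a ≠ b)
    (hA : ∀ x : A, x = a ∨ x = b) :
    ∃ S₁ S₂ : Spliffer A, S₁.Deterministic ∧ S₂.Deterministic ∧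
      S₁.behavior = setL1 a b ∧ S₂.behavior = setL2 a b ∧
      S₁.behavior ∩ S₂.behavior = setLcap a b ∧
      ¬ ∃ S : Spliffer A, S.behavior = S₁.behavior ∩ S₂.behavior :=
  not_closed_under_intersection_general a b hab
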